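/- For σ ∈ Sₙ, ρ ∈ Sₘ with m+n ≥ 1, and a word w = uv with |u| = n, |v| = m, the MR product acts on words as (σ *′ ρ)·w = sh((σ·u) ⊗ (ρ·v)). -/

import Mathlib

def shuffle {A : Type*} : List A → List A → Multiset (List A)
  | [], w => {w}
  | u, [] => {u}
  | a :: u, b :: v => (shuffle u (b :: v)).map (a :: ·) + (shuffle (a :: u) v).map (b :: ·)
termination_by u v => u.length + v.length
decreasing_by all_goals simp +arith

def IsPermWord (w : List ℕ) : Prop := w.Perm (List.range w.length)

/-- MR product on permutation words: `σ *′ ρ := sh(σ ⊗ ρ̄)`, `ρ̄(i) = |σ| + ρ(i)`. -/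
def mrW (u v : List ℕ) : Multiset (List ℕ) := shuffle u (v.map (· + u.length))

/-- The action of a permutation word on words: `σ·(a₁⋯aₙ) = a_{σ1}⋯a_{σn}` (0-indexed). -/
def applyW {A : Type*} [Inhabited A] (σ : List ℕ) (w : List A) : List A :=
  σ.map fun i => w.getD i default

/-! The MR product is the shuffle of `σ` with a shifted copy of `ρ`, and acting on `uv`
amounts to applying the letter map `i ↦ (uv)ᵢ` to every shuffle. Shuffling commutes with
letter maps, and that letter map reads `σ` inside `u` (its letters are `< |σ| = |u|`) and
the shifted `ρ` inside `v`. -/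

theorem shuffle_map {A B : Type*} (f : A → B) :
    ∀ u v : List A, (shuffle u v).map (List.map f) = shuffle (u.map f) (v.map f)
  | [], w => by simp [shuffle]
  | a :: u, [] => by simp [shuffle]
  | a :: u, b :: v => by
      have ihl := shuffle_map f u (b :: v)
      have ihr := shuffle_map f (a :: u) v
      simp only [List.map_cons] at ihl ihr ⊢
      rw [shuffle, shuffle, ← ihl, ← ihr]
      simp [Multiset.map_map]
termination_by u v => u.length + v.length
decreasing_by all_goals simp +arith

theorem IsPermWord.lt_length {σ : List ℕ} (hσ : IsPermWord σ) {i : ℕ} (hi : i ∈ σ) :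
    i < σ.length :=
  List.mem_range.mp (hσ.mem_iff.mp hi)

theorem applyW_append_left {A : Type*} [Inhabited A] {σ : List ℕ} {u : List A}
    (hσ : ∀ i ∈ σ, i < u.length) (v : List A) :
    applyW σ (u ++ v) = applyW σ u :=
  List.map_congr_left fun i hi => by
    simp [List.getD, List.getElem?_append_left (hσ i hi)]

theorem applyW_map_add_length_append {A : Type*} [Inhabited A] (ρ : List ℕ) (u v : List A) :
    applyW (ρ.map (· + u.length)) (u ++ v) = applyW ρ v := by
  simp [applyW, List.getD, Function.comp_def,
    List.getElem?_append_right (Nat.le_add_left u.length _)]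

theorem mrW_map_applyW {A : Type*} [Inhabited A] (σ ρ : List ℕ) (w : List A) :
    (mrW σ ρ).map (fun π => applyW π w) =
      shuffle (applyW σ w) (applyW (ρ.map (· + σ.length)) w) :=
  shuffle_map _ σ _

theorem mr_action_on_words_general {A : Type*} [Inhabited A]
    (σ ρ : List ℕ) (hσ : IsPermWord σ)
    (u v : List A) (hu : u.length = σ.length) :
    (mrW σ ρ).map (fun π => applyW π (u ++ v)) = shuffle (applyW σ u) (applyW ρ v) := by
  rw [mrW_map_applyW, ← hu, applyW_map_add_length_append,
    applyW_append_left fun i hi => hu ▸ hσ.lt_length hi]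

/-- for `σ ∈ Sₙ`, `ρ ∈ Sₘ` with `n + m ≥ 1` and a word `w = uv` with
`|u| = n`, `|v| = m`, the MR product acts on words by `(σ *′ ρ)·w = sh((σ·u) ⊗ (ρ·v))`. -/
theorem mr_action_on_words {A : Type*} [Inhabited A]
    (σ ρ : List ℕ) (hσ : IsPermWord σ) (hρ : IsPermWord ρ)
    (u v : List A) (hu : u.length = σ.length) (hv : v.length = ρ.length)
    (hnm : 1 ≤ σ.length + ρ.length) :
    (mrW σ ρ).map (fun π => applyW π (u ++ v)) = shuffle (applyW σ u) (applyW ρ v) :=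
  mr_action_on_words_general σ ρ hσ u v hu
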